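/- Let ν, s ∈ ℂ with s ≠ 0 and s² = ν, and set λ = (1 − ν²)/4. On the slit plane Ω = ℂ ∖ (−∞,0], define, using the principal branch z^μ := exp(μ·Log z), the map F₀(z) = (1/2)·[[(s + s⁻¹)·z^{(1−ν)/2}, (s − s⁻¹)·z^{(1+ν)/2}],[(s − s⁻¹)·z^{−(1+ν)/2}, (s + s⁻¹)·z^{−(1−ν)/2}]]. Then for every z ∈ Ω: (i) det F₀(z) = 1, and (ii) F₀ is complex-differentiable at z with F₀′(z) = (λ/z²)·[[z, −z²],[1, −z]]·F₀(z); equivalently, F₀ solves dF·F⁻¹ = [[G, −G²],[1, −G]]·Ω with Weierstrass data G = z and Ω = λ·dz/z². -/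

import Mathlib

open Matrix

/-- Principal power z^μ = exp(μ · Log z). -/
noncomputable def ppow (z μ : ℂ) : ℂ := Complex.exp (μ * Complex.log z)

/-- The frame F₀ for the elliptic and hyperbolic catenoids. -/
noncomputable def F₀ (s ν : ℂ) (z : ℂ) : Matrix (Fin 2) (Fin 2) ℂ :=
  (1 / 2 : ℂ) •
    !![(s + s⁻¹) * ppow z ((1 - ν) / 2), (s - s⁻¹) * ppow z ((1 + ν) / 2);
       (s - s⁻¹) * ppow z (-((1 + ν) / 2)), (s + s⁻¹) * ppow z (-((1 - ν) / 2))]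

/-! Every entry of `F₀` is a constant times a principal power `z^μ`, whose logarithmic
derivative is `μ / z`. Since `s² = ν` the constants satisfy
`(s + s⁻¹) = (1 + ν) s⁻¹` and `(s - s⁻¹) = (ν - 1) s⁻¹`, and shifting exponents by one
(`z · z^μ = z^(μ+1)`) turns `λ/z² · [[z, -z²], [1, -z]] F₀` into these logarithmic
derivatives. The determinant is `((s + s⁻¹)² - (s - s⁻¹)²) / 4 = s s⁻¹`. -/

lemma ppow_neg_mul_ppow (z μ : ℂ) : ppow z (-μ) * ppow z μ = 1 := by
  simp [ppow, ← Complex.exp_add]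

lemma ppow_add_one {z : ℂ} (hz : z ≠ 0) (μ : ℂ) : ppow z (μ + 1) = z * ppow z μ := by
  rw [ppow, add_mul, one_mul, Complex.exp_add, Complex.exp_log hz, mul_comm, ppow]

lemma hasDerivAt_ppow {z : ℂ} (hz : z ∈ Complex.slitPlane) (μ : ℂ) :
    HasDerivAt (ppow · μ) (μ / z * ppow z μ) z :=
  ((Complex.hasDerivAt_log hz).const_mul μ).cexp.congr_deriv (by rw [ppow]; ring)

noncomputable def F₀Exponent (ν : ℂ) : Matrix (Fin 2) (Fin 2) ℂ :=
  !![(1 - ν) / 2, (1 + ν) / 2; -((1 + ν) / 2), -((1 - ν) / 2)]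

noncomputable def F₀Coeff (s : ℂ) : Matrix (Fin 2) (Fin 2) ℂ :=
  !![s + s⁻¹, s - s⁻¹; s - s⁻¹, s + s⁻¹]

lemma F₀_apply (s ν w : ℂ) (i j : Fin 2) :
    F₀ s ν w i j = 1 / 2 * (F₀Coeff s i j * ppow w (F₀Exponent ν i j)) := by
  fin_cases i <;> fin_cases j <;> rfl

lemma hasDerivAt_F₀_apply (s ν : ℂ) {z : ℂ} (hz : z ∈ Complex.slitPlane) (i j : Fin 2) :
    HasDerivAt (fun w => F₀ s ν w i j) (F₀Exponent ν i j / z * F₀ s ν z i j) z := by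
  simp only [F₀_apply]
  exact (((hasDerivAt_ppow hz _).const_mul _).const_mul _).congr_deriv (by ring)

theorem det_F₀ {s : ℂ} (hs : s ≠ 0) (ν z : ℂ) : (F₀ s ν z).det = 1 := by
  simp only [F₀, det_smul, det_fin_two_of, Fintype.card_fin]
  linear_combination ((s + s⁻¹) ^ 2 / 4) * ppow_neg_mul_ppow z ((1 - ν) / 2)
    - ((s - s⁻¹) ^ 2 / 4) * ppow_neg_mul_ppow z ((1 + ν) / 2) + mul_inv_cancel₀ hs

theorem F₀Exponent_div_mul_F₀ {s ν : ℂ} (hs : s ≠ 0) (hsν : s ^ 2 = ν) {z : ℂ} (hz : z ≠ 0)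
    (i j : Fin 2) :
    F₀Exponent ν i j / z * F₀ s ν z i j =
      ((((1 - ν ^ 2) / 4) / z ^ 2) • (!![z, -z ^ 2; 1, -z] * F₀ s ν z)) i j := by
  have e₁ : ppow z ((1 - ν) / 2) = z * ppow z (-((1 + ν) / 2)) := by
    rw [← ppow_add_one hz]; congr 1; ring
  have e₂ : ppow z ((1 + ν) / 2) = z * ppow z (-((1 - ν) / 2)) := by
    rw [← ppow_add_one hz]; congr 1; ring
  subst hsν
  fin_cases i <;> fin_cases j <;>
    simp only [F₀Exponent, F₀, Matrix.smul_apply, mul_apply, Fin.sum_univ_two, of_apply, cons_val',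
      cons_val_zero, cons_val_one, cons_val_fin_one, smul_eq_mul, Fin.zero_eta, Fin.mk_one,
      e₁, e₂] <;>
    field_simp <;>
    ring

theorem catenoid_frame (ν s : ℂ) (hs : s ≠ 0) (hsν : s ^ 2 = ν)
    (z : ℂ) (hz : z ∈ Complex.slitPlane) :
    (F₀ s ν z).det = 1 ∧
    ∀ i j : Fin 2,
      HasDerivAt (fun w => F₀ s ν w i j)
        (((((1 - ν ^ 2) / 4) / z ^ 2) • (!![z, -z ^ 2; 1, -z] * F₀ s ν z)) i j) z :=
  ⟨det_F₀ hs ν z, fun i j => F₀Exponent_div_mul_F₀ hs hsν (Complex.slitPlane_ne_zero hz) i j ▸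
    hasDerivAt_F₀_apply s ν hz i j⟩
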